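/- arXiv:2001.03540 — 10 statements merged into one kernel-verified Lean document; each statement's English description precedes it below -/
import Mathlib

section
/- Let (X,<) be a partially ordered set which is chain bounded with respect to an approximation function, and let P be a predicate on X which is piecewise with respect to the same approximation function. Then whenever P(x) holds for some x ∈ X, there exists y ∈ X such that P(y) holds but ¬P(z) for all z with y < z. -/
/-- Zorn's lemma with approximation functions (Theorem 2.6 of the paper). -/
theorem zorn_piecewise {X D U : Type*} [PartialOrder X] (app : X → D → U)
    (hcb : ∀ γ : Set X, γ.Nonempty → IsChain (· ≤ ·) γ →
      ∃ u : X, (∀ x ∈ γ, x ≤ u) ∧ ∀ d : D, ∃ x ∈ γ, app u d = app x d)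
    (P : X → Prop) (Q : U → Prop) (hpw : ∀ x, P x ↔ ∀ d : D, Q (app x d))
    (x : X) (hx : P x) :
    ∃ y : X, P y ∧ ∀ z : X, y < z → ¬ P z := by
  obtain ⟨m, -, hmP, hmax⟩ := zorn_le_nonempty₀ {y : X | P y} (fun c hcs hc y hy => by
    obtain ⟨u, hub, happ⟩ := hcb c ⟨y, hy⟩ hc
    refine ⟨u, ?_, hub⟩
    show P u
    rw [hpw]
    intro d
    obtain ⟨z, hz, he⟩ := happ d
    rw [he]
    exact (hpw z).mp (hcs hz) d) x hx
  exact ⟨m, hmP, fun z hz hPz => hz.ne (le_antisymm hz.le (hmax hPz hz.le))⟩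
end

section
/- Let (X,<) be a partially ordered set which is chain bounded with respect to an approximation function ⌊·⌋ : X × D → U, and let P be a piecewise predicate with respect to this function. Then the set S := {x ∈ X | P(x)} is chain bounded in the ordinary sense: every nonempty chain in S has an upper bound lying in S. -/
/-- If `(X,<)` is chain bounded w.r.t. an approximation function and `P` is piecewise
w.r.t. the same function, then `S := {x | P x}` is chain bounded in the ordinary sense. -/
theorem piecewise_chainBounded {X D U : Type*} [PartialOrder X] (app : X → D → U)
    (hcb : ∀ γ : Set X, γ.Nonempty → IsChain (· ≤ ·) γ →
      ∃ u : X, (∀ x ∈ γ, x ≤ u) ∧ ∀ d : D, ∃ x ∈ γ, app u d = app x d)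
    (P : X → Prop) (Q : U → Prop) (hpw : ∀ x, P x ↔ ∀ d : D, Q (app x d)) :
    ∀ γ : Set X, γ ⊆ {x | P x} → γ.Nonempty → IsChain (· ≤ ·) γ →
      ∃ u ∈ {x | P x}, ∀ x ∈ γ, x ≤ u := by
  intro γ hsub hne hchain
  obtain ⟨u, hub, happ⟩ := hcb γ hne hchain
  refine ⟨u, ?_, hub⟩
  rw [Set.mem_setOf_eq, hpw]
  intro d
  obtain ⟨x, hxγ, hx⟩ := happ d
  rw [hx]
  exact (hpw x).mp (hsub hxγ) d
end

section
/- For any nontrivial ring R with unity, the predicate 'x is a proper ideal of R' on subsets x of R is piecewise with respect to the approximation function ⌊x⌋_d (restriction of the characteristic function of x to the finite set d). That is, there exists a predicate Q on approximations (functions from finite subsets of R to {0,1}) such that x is a proper ideal iff Q(⌊x⌋_d) holds for all finite d ⊆ R. -/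
/-- `x ⊆ R` is a proper (two-sided) ideal of the ring `R`. -/
def IsProperIdealSet {R : Type*} [Ring R] (x : Set R) : Prop :=
  (0 : R) ∈ x ∧ (1 : R) ∉ x ∧ (∀ a ∈ x, ∀ b ∈ x, a + b ∈ x) ∧
    ∀ r : R, ∀ a ∈ x, r * a ∈ x ∧ a * r ∈ x

open scoped Classical in
/-- The predicate "`x` is a proper ideal of `R`" is piecewise with respect to the
approximation function restricting the characteristic function of `x` to a finite set. -/
theorem properIdeal_piecewise {R : Type*} [Ring R] [Nontrivial R] :
    ∃ Q : (d : Finset R) → ({a : R // a ∈ d} → Bool) → Prop,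
      ∀ x : Set R, IsProperIdealSet x ↔
        ∀ d : Finset R, Q d (fun a => decide (a.val ∈ x)) := by
  refine ⟨fun d f =>
    (∀ h : (0 : R) ∈ d, f ⟨0, h⟩ = true) ∧
    (∀ h : (1 : R) ∈ d, f ⟨1, h⟩ = false) ∧
    (∀ a b : R, ∀ ha : a ∈ d, ∀ hb : b ∈ d, ∀ hab : a + b ∈ d,
      f ⟨a, ha⟩ = true → f ⟨b, hb⟩ = true → f ⟨a + b, hab⟩ = true) ∧
    (∀ r a : R, ∀ ha : a ∈ d, ∀ hra : r * a ∈ d, ∀ har : a * r ∈ d,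
      f ⟨a, ha⟩ = true → f ⟨r * a, hra⟩ = true ∧ f ⟨a * r, har⟩ = true),
    fun x => ⟨?_, ?_⟩⟩
  · rintro ⟨h0, h1, hadd, hmul⟩ d
    refine ⟨fun _ => by simpa using h0, fun _ => by simpa using h1,
      fun a b _ _ _ ha hb => ?_, fun r a _ _ _ ha => ?_⟩
    · simp only [decide_eq_true_eq] at *
      exact hadd a ha b hb
    · simp only [decide_eq_true_eq] at *
      exact hmul r a ha
  · intro h
    refine ⟨?_, ?_, ?_, ?_⟩
    · have := (h {0}).1 (by simp)
      simpa using this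
    · have := (h {1}).2.1 (by simp)
      simpa using this
    · intro a ha b hb
      have := (h {a, b, a + b}).2.2.1 a b (by simp) (by simp) (by simp)
        (by simpa using ha) (by simpa using hb)
      simpa using this
    · intro r a ha
      have := (h {a, r * a, a * r}).2.2.2 r a (by simp) (by simp) (by simp)
        (by simpa using ha)
      simpa using this
end

section
/- Let Q be a predicate on finite boolean sequences, and define P(x) := ∀ n, Q(⟨x(0),…,x(n−1)⟩) for x : ℕ → Bool. If P(x) holds for some x, then there exists y : ℕ → Bool with P(y) such that for all n and z : ℕ → Bool, if y(n) = false and z(n) = true then ¬P(y ∪ z), where (y ∪ z)(i) = true iff y(i) = true or z(i) = true. -/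
/-- The instance of Zorn's lemma for the powerset of `ℕ` with initial-segment
approximations (Example 3.3 of the paper). -/
theorem zorn_powerset_nat (Q : List Bool → Prop)
    (hex : ∃ x : ℕ → Bool, ∀ n : ℕ, Q ((List.range n).map x)) :
    ∃ y : ℕ → Bool, (∀ n : ℕ, Q ((List.range n).map y)) ∧
      ∀ (n : ℕ) (z : ℕ → Bool), y n = false → z n = true →
        ¬ ∀ m : ℕ, Q ((List.range m).map (fun i => y i || z i)) := by
  classical
  obtain ⟨x, hx⟩ := hex
  set S : Set (ℕ → Bool) := {f | ∀ n : ℕ, Q ((List.range n).map f)} with hS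
  have hub0 : ∀ c ⊆ S, IsChain (· ≤ ·) c → ∀ y ∈ c, ∃ ub ∈ S, ∀ z ∈ c, z ≤ ub := by
    intro c hcS hchain y hy
    -- upper bound of a nonempty chain
    set u : ℕ → Bool := fun i => decide (∃ f ∈ c, f i = true) with hu
    have hub : ∀ f ∈ c, f ≤ u := by
      intro f hf i
      cases hfi : f i
      · simp
      · simp only [hu, decide_eq_true_eq]
        exact le_of_eq (decide_eq_true ⟨f, hf, hfi⟩).symm
    refine ⟨u, ?_, hub⟩
    -- show u ∈ S : for each n, u agrees with a chain element on range n
    intro n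
    have key : ∀ k : ℕ, ∃ f ∈ c, ∀ i < k, f i = u i := by
      intro k
      induction k with
      | zero => exact ⟨y, hy, fun i h => absurd h (Nat.not_lt_zero i)⟩
      | succ k ih =>
        obtain ⟨f, hf, hfk⟩ := ih
        cases hun : u k with
        | false =>
          refine ⟨f, hf, fun i hi => ?_⟩
          rcases Nat.lt_succ_iff_lt_or_eq.mp hi with h | rfl
          · exact hfk i h
          · have h2 := hub f hf i
            rw [hun] at h2
            rw [hun]
            cases hfi : f i
            · rfl
            · rw [hfi] at h2; exact ((Bool.le_iff_imp.mp h2) rfl).symm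
        | true =>
          have : ∃ g ∈ c, g k = true := by
            have := of_decide_eq_true hun
            exact this
          obtain ⟨g, hg, hgk⟩ := this
          rcases hchain.total hf hg with hfg | hgf
          · refine ⟨g, hg, fun i hi => ?_⟩
            rcases Nat.lt_succ_iff_lt_or_eq.mp hi with h | rfl
            · have h1 := hfg i
              have h2 := hub g hg i
              rw [hfk i h] at h1
              exact le_antisymm h2 h1
            · rw [hgk, hun]
          · refine ⟨f, hf, fun i hi => ?_⟩
            rcases Nat.lt_succ_iff_lt_or_eq.mp hi with h | rfl
            · exact hfk i h
            · have h1 := hgf i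
              rw [hgk] at h1
              rw [hun]
              exact (le_antisymm h1 (Bool.le_true _)).symm
    obtain ⟨f, hf, hfn⟩ := key n
    have : (List.range n).map u = (List.range n).map f := by
      apply List.map_congr_left
      intro i hi
      exact (hfn i (List.mem_range.mp hi)).symm
    rw [this]
    exact hcS hf n
  obtain ⟨m, -, hmS, hmax⟩ := zorn_le_nonempty₀ S hub0 x hx
  · refine ⟨m, hmS, ?_⟩
    intro n z hmn hzn hP
    have hle : m ≤ (fun i => m i || z i) := fun i => by
      cases hmi : m i <;> simp [hmi]
    have := hmax hP hle
    have hn : (m n || z n) ≤ m n := this n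
    rw [hmn, hzn] at hn
    simp only [Bool.le_iff_imp] at hn; exact Bool.false_ne_true (hn rfl)
end

section
/- Let θ be a type with a well-founded relation ◁, and order X := ℕ → θ by: y > x iff there exists n such that y and x agree on all i < n and y(n) ◁ x(n) (lexicographic: y is lexicographically below x). Then every nonempty chain γ ⊆ X with respect to < has an upper bound u_γ such that for every d ∈ ℕ there exists x ∈ γ agreeing with u_γ on all i < d. -/
/-!
Choose `u` coordinate by coordinate: `u k` is a `◁`-minimal value of `x k` over the members
`x` of the chain that agree with `u` below `k` (these sets of members stay nonempty by
well-foundedness). Two such members are comparable, and their first difference would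
contradict the minimality of one of them, so the minimal value is unique. A member `x ≠ u`
first differs from `u` at some `k`; comparing `x` with a member that agrees with `u` up to
and including `k`, minimality rules out `x k ◁ u k`, so `u k ◁ x k`, i.e. `u` lies above `x`.
-/

/-- `LexGt lt x y` : `y > x` in the lexicographic order, i.e. `y` agrees with `x`
below some `n` and `y n ◁ x n`. -/
def LexGt {θ : Type*} (lt : θ → θ → Prop) (x y : ℕ → θ) : Prop :=
  ∃ n : ℕ, (∀ i < n, y i = x i) ∧ lt (y n) (x n)

section LexChainBound

variable {θ : Type*} {lt : θ → θ → Prop}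

theorem LexGt.lt_of_eqOn_of_ne [Std.Irrefl lt] {x y : ℕ → θ} {n : ℕ} (h : LexGt lt x y)
    (heq : ∀ i < n, y i = x i) (hne : y n ≠ x n) : lt (y n) (x n) := by
  obtain ⟨m, hm, hlt⟩ := h
  rcases lt_trichotomy m n with hmn | rfl | hnm
  · exact absurd (heq m hmn ▸ hlt) (irrefl _)
  · exact hlt
  · exact absurd (hm n hnm) hne

variable (lt) (γ : Set (ℕ → θ))

def lexMinStage : ℕ → Set (ℕ → θ)
  | 0 => γ
  | n + 1 => {x ∈ lexMinStage n | ∀ y ∈ lexMinStage n, ¬ lt (y n) (x n)}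

variable {lt γ}

theorem lexMinStage_antitone : Antitone (lexMinStage lt γ) :=
  antitone_nat_of_succ_le fun _ => Set.sep_subset _ _

theorem lexMinStage_subset (n : ℕ) : lexMinStage lt γ n ⊆ γ :=
  lexMinStage_antitone n.zero_le

theorem lexMinStage_nonempty (hwf : WellFounded lt) (hne : γ.Nonempty) :
    ∀ n, (lexMinStage lt γ n).Nonempty
  | 0 => hne
  | n + 1 => by
    obtain ⟨_, ⟨x, hx, rfl⟩, hmin⟩ :=
      hwf.has_min _ ((lexMinStage_nonempty hwf hne n).image (· n))
    exact ⟨x, hx, fun y hy => hmin _ ⟨y, hy, rfl⟩⟩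

theorem lexMinStage_eqOn [Std.Irrefl lt] (hchain : IsChain (LexGt lt) γ) :
    ∀ {n : ℕ} {x y : ℕ → θ}, x ∈ lexMinStage lt γ n → y ∈ lexMinStage lt γ n →
      ∀ i < n, x i = y i
  | n + 1, x, y, ⟨hx, hxmin⟩, ⟨hy, hymin⟩, i, hi => by
    have heq : ∀ i < n, x i = y i := lexMinStage_eqOn hchain hx hy
    rcases Nat.lt_succ_iff_lt_or_eq.1 hi with hi | rfl
    · exact heq i hi
    by_contra hne
    have hxy : x ≠ y := fun h => hne (congrFun h i)
    rcases hchain (lexMinStage_subset _ hx) (lexMinStage_subset _ hy) hxy with h | h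
    · exact hxmin y hy (h.lt_of_eqOn_of_ne (fun j hj => (heq j hj).symm) (Ne.symm hne))
    · exact hymin x hx (h.lt_of_eqOn_of_ne heq hne)

/-- All members of `lexMinStage lt γ (n + 1)` share their value at `n` (`lexMinStage_eqOn`). -/
noncomputable def lexChainBound (hwf : WellFounded lt) (hne : γ.Nonempty) (n : ℕ) : θ :=
  (lexMinStage_nonempty hwf hne (n + 1)).some n

theorem eq_lexChainBound_of_mem_lexMinStage (hwf : WellFounded lt) (hne : γ.Nonempty)
    (hchain : IsChain (LexGt lt) γ) {n : ℕ} {x : ℕ → θ} (hx : x ∈ lexMinStage lt γ n)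
    {i : ℕ} (hi : i < n) : x i = lexChainBound hwf hne i :=
  haveI := hwf.irrefl
  lexMinStage_eqOn hchain (lexMinStage_antitone hi hx)
    (lexMinStage_nonempty hwf hne (i + 1)).some_mem i i.lt_succ_self

theorem mem_lexMinStage_of_eqOn (hwf : WellFounded lt) (hne : γ.Nonempty) {x : ℕ → θ}
    (hx : x ∈ γ) : ∀ {n : ℕ}, (∀ i < n, x i = lexChainBound hwf hne i) → x ∈ lexMinStage lt γ n
  | 0, _ => hx
  | n + 1, heq => by
    refine ⟨mem_lexMinStage_of_eqOn hwf hne hx fun i hi => heq i (hi.trans n.lt_succ_self), ?_⟩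
    rw [heq n n.lt_succ_self]
    exact (lexMinStage_nonempty hwf hne (n + 1)).some_mem.2

theorem lexGt_lexChainBound (hwf : WellFounded lt) (hne : γ.Nonempty)
    (hchain : IsChain (LexGt lt) γ) {n : ℕ} {x : ℕ → θ} (hx : x ∈ lexMinStage lt γ n)
    (hxn : x n ≠ lexChainBound hwf hne n) : LexGt lt x (lexChainBound hwf hne) := by
  have := hwf.irrefl
  obtain ⟨hw, hwmin⟩ := (lexMinStage_nonempty hwf hne (n + 1)).some_mem
  set w := (lexMinStage_nonempty hwf hne (n + 1)).some
  have heq : ∀ i < n, w i = x i := lexMinStage_eqOn hchain hw hx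
  have hxw : x ≠ w := fun h => hxn (congrFun h n)
  rcases hchain (lexMinStage_subset n hx) (lexMinStage_subset n hw) hxw with h | h
  · exact ⟨n, fun i hi => (eq_lexChainBound_of_mem_lexMinStage hwf hne hchain hx hi).symm,
      h.lt_of_eqOn_of_ne heq (Ne.symm hxn)⟩
  · exact absurd (h.lt_of_eqOn_of_ne (fun i hi => (heq i hi).symm) hxn) (hwmin x hx)

end LexChainBound

/-- Chain boundedness of the lexicographic ordering on sequences (Lemma 6.2 of the
paper): every nonempty chain has an upper bound agreeing with a chain member on
every initial segment. -/
theorem lex_chainBounded {θ : Type*} (lt : θ → θ → Prop) (hwf : WellFounded lt)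
    (γ : Set (ℕ → θ)) (hne : γ.Nonempty)
    (hchain : ∀ x ∈ γ, ∀ y ∈ γ, x ≠ y → LexGt lt x y ∨ LexGt lt y x) :
    ∃ u : ℕ → θ, (∀ x ∈ γ, x = u ∨ LexGt lt x u) ∧
      ∀ d : ℕ, ∃ x ∈ γ, ∀ i < d, x i = u i := by
  have hγ : IsChain (LexGt lt) γ := fun x hx y hy => hchain x hx y hy
  refine ⟨lexChainBound hwf hne, fun x hx => or_iff_not_imp_left.2 fun hxu => ?_, fun d => ?_⟩
  · classical
    have hdiff := Function.ne_iff.1 hxu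
    have hagree : ∀ i < Nat.find hdiff, x i = lexChainBound hwf hne i :=
      fun i hi => not_not.1 (Nat.find_min hdiff hi)
    exact lexGt_lexChainBound hwf hne hγ (mem_lexMinStage_of_eqOn hwf hne hx hagree)
      (Nat.find_spec hdiff)
  · obtain ⟨x, hx⟩ := lexMinStage_nonempty hwf hne d
    exact ⟨x, lexMinStage_subset d hx, fun i hi =>
      eq_lexChainBound_of_mem_lexMinStage hwf hne hγ hx hi⟩
end

section
/- Let θ be a type with a transitive, well-founded relation ◁ such that every nonempty subset of θ arising from a chain has a ◁-minimal element, and let ⊕, ≻ and the lexicographic order < be as defined. Then for any predicate Q on finite sequences over θ: if there exists x : ℕ → θ with ∀ d, Q(⟨x(0),…,x(d−1)⟩), then there exists y : ℕ → θ with ∀ d, Q(⟨y(0),…,y(d−1)⟩) and such that for all n and z : ℕ → θ with z(n) ◁ y(n), there exists d with ¬Q(⟨(⟨y(0),…,y(n−1)⟩ @ z)(0),…,(⟨y(0),…,y(n−1)⟩ @ z)(d−1)⟩). -/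
/-!
Choose the sequence greedily: having fixed `y 0, …, y (n-1)`, let `y n` be a `◁`-minimal value
at position `n` among all good sequences extending this prefix (well-foundedness). Each prefix of
`y` is then a prefix of a good sequence, so `y` is good, because goodness is a condition on finite
prefixes; and a good sequence below `y` would contradict the minimal choice at the first position
where it differs.
-/

open Set

section LexMin

variable {θ : Type*} {r : θ → θ → Prop} {P : (ℕ → θ) → Prop}

theorem WellFounded.exists_min_eqOn_Iio (hwf : WellFounded r) (w : {w // P w}) (n : ℕ) :
    ∃ v : {v // P v}, EqOn v.1 w.1 (Iio n) ∧
      ∀ z, P z → EqOn z w.1 (Iio n) → ¬ r (z n) (v.1 n) := by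
  obtain ⟨a, ⟨v, ⟨hv, hvw⟩, rfl⟩, hmin⟩ := hwf.has_min
    ((fun z => z n) '' {z | P z ∧ EqOn z w.1 (Iio n)}) ⟨w.1 n, w.1, ⟨w.2, fun _ _ => rfl⟩, rfl⟩
  exact ⟨⟨v, hv⟩, hvw, fun z hz hzw => hmin (z n) ⟨z, ⟨hz, hzw⟩, rfl⟩⟩

theorem WellFounded.exists_lex_minimal (hwf : WellFounded r) (hP : ∃ x, P x) :
    ∃ y : ℕ → θ, (∀ n, ∃ z, P z ∧ EqOn z y (Iio n)) ∧
      ∀ n z, P z → EqOn z y (Iio n) → ¬ r (z n) (y n) := by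
  obtain ⟨x, hx⟩ := hP
  choose step hstep_eqOn hstep_min using hwf.exists_min_eqOn_Iio (P := P)
  let w : ℕ → {w // P w} := fun n => Nat.rec ⟨x, hx⟩ (fun n v => step v n) n
  let y : ℕ → θ := fun n => (w (n + 1)).1 n
  have hwy : ∀ n, EqOn (w n).1 y (Iio n) := by
    intro n
    induction n with
    | zero => simp
    | succ n ih =>
      intro i (hi : i < n + 1)
      rcases Nat.lt_succ_iff_lt_or_eq.mp hi with hi | rfl
      · exact (hstep_eqOn (w n) n hi).trans (ih hi)
      · rfl
  refine ⟨y, fun n => ⟨(w n).1, (w n).2, hwy n⟩, fun n z hz hzy => ?_⟩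
  exact hstep_min (w n) n z hz (hzy.trans (hwy n).symm)

end LexMin

theorem lex_zorn_general {θ : Type*} (lt : θ → θ → Prop)
    (hwf : WellFounded lt)
    (Q : List θ → Prop)
    (hex : ∃ x : ℕ → θ, ∀ d : ℕ, Q ((List.range d).map x)) :
    ∃ y : ℕ → θ, (∀ d : ℕ, Q ((List.range d).map y)) ∧
      ∀ (n : ℕ) (z : ℕ → θ), lt (z n) (y n) →
        ∃ d : ℕ, ¬ Q ((List.range d).map (fun i => if i < n then y i else z i)) := by
  have map_range_congr : ∀ {d} {u v : ℕ → θ}, EqOn u v (Iio d) →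
      (List.range d).map u = (List.range d).map v := fun huv =>
    List.map_congr_left fun i hi => huv (List.mem_range.mp hi)
  obtain ⟨y, hprefix, hmin⟩ := hwf.exists_lex_minimal hex
  refine ⟨y, fun d => ?_, fun n z hlt => ?_⟩
  · obtain ⟨z, hz, hzy⟩ := hprefix d
    simpa only [map_range_congr hzy] using hz d
  · by_contra! hgood
    refine hmin n _ hgood (fun i (hi : i < n) => if_pos hi) ?_
    simpa using hlt

/-- The principle `LEX_◁` : Zorn's lemma / open induction for the lexicographic
ordering on sequences. -/
theorem lex_zorn {θ : Type*} (lt : θ → θ → Prop)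
    (hwf : WellFounded lt) (htrans : Transitive lt)
    (htri : ∀ a b : θ, lt a b ∨ a = b ∨ lt b a)
    (Q : List θ → Prop)
    (hex : ∃ x : ℕ → θ, ∀ d : ℕ, Q ((List.range d).map x)) :
    ∃ y : ℕ → θ, (∀ d : ℕ, Q ((List.range d).map y)) ∧
      ∀ (n : ℕ) (z : ℕ → θ), lt (z n) (y n) →
        ∃ d : ℕ, ¬ Q ((List.range d).map (fun i => if i < n then y i else z i)) :=
  lex_zorn_general lt hwf Q hex
end

section
/- Let ψ : P_σ → P_θ be a Scott-continuous function between domains, where θ is a discrete type (built from flat domains ℕ_⊥, 𝔹_⊥ by products and finite sequences only). Suppose x : ℕ_⊥ → P_σ is total with x(⊥) = ⊥ and ψ(x) is total. Then there exists d ∈ ℕ such that for all y : ℕ_⊥ → P_σ, if x(i) = y(i) for all i < d, then ψ(x) = ψ(y). -/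
open OmegaCompletePartialOrder in
/-- Sequential continuity lemma (Lemma 4.6 of the paper), in an abstract domain-theoretic
setting: `Dσ` is the domain of partial objects of type `σ` (with bottom), `E` the domain
interpreting the discrete type `θ`, whose set `TE` of total elements is Scott-open
(inaccessible by suprema of ω-chains) and consists of maximal elements.  Strict functions
`ℕ_⊥ → Dσ` are modelled as functions `ℕ → Dσ` (the value at `⊥` being forced to `⊥`).
If `ψ` is ω-continuous, `x` is total and `ψ x` is total, then `ψ x` only depends on a
finite initial segment of `x`. -/
theorem seq_continuity {Dσ E : Type*} [OmegaCompletePartialOrder Dσ] [OrderBot Dσ]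
    [OmegaCompletePartialOrder E]
    (Tσ : Set Dσ) (TE : Set E)
    (hTEopen : ∀ c : Chain E, ωSup c ∈ TE → ∃ n : ℕ, c n ∈ TE)
    (hTEmax : ∀ y ∈ TE, ∀ z : E, y ≤ z → y = z)
    (ψ : (ℕ → Dσ) → E) (hψ : OmegaCompletePartialOrder.ωScottContinuous ψ)
    (x : ℕ → Dσ) (hxtot : ∀ i, x i ∈ Tσ) (hψx : ψ x ∈ TE) :
    ∃ d : ℕ, ∀ y : ℕ → Dσ, (∀ i < d, x i = y i) → ψ x = ψ y := by
  -- truncation chain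
  have hmono : Monotone (fun n : ℕ => (fun i => if i < n then x i else ⊥ : ℕ → Dσ)) := by
    intro m n hmn i
    dsimp only
    split_ifs with h1 h2
    · exact le_rfl
    · exact absurd (lt_of_lt_of_le h1 hmn) h2
    · exact bot_le
    · exact le_rfl
  let c : Chain (ℕ → Dσ) := ⟨_, hmono⟩
  have hc : ∀ n i, c n i = if i < n then x i else ⊥ := fun _ _ => rfl
  have hsup : ωSup c = x := by
    apply le_antisymm
    · apply ωSup_le
      intro n i
      rw [hc]
      split_ifs <;> simp
    · intro i
      have h := le_ωSup c (i + 1) i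
      rwa [hc, if_pos (Nat.lt_succ_self i)] at h
  have hψsup : ωSup (c.map ⟨ψ, hψ.monotone⟩) ∈ TE := by
    rw [← hψ.map_ωSup, hsup]; exact hψx
  obtain ⟨n, hn⟩ := hTEopen _ hψsup
  have hcn : ψ (c n) ∈ TE := hn
  refine ⟨n, fun y hy => ?_⟩
  have h1 : ψ (c n) = ψ x := by
    apply hTEmax _ hcn
    apply hψ.monotone
    intro i; rw [hc]; split_ifs <;> simp
  have h2 : ψ (c n) = ψ y := by
    apply hTEmax _ hcn
    apply hψ.monotone
    intro i; rw [hc]; split_ifs with h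
    · exact (hy i h).symm ▸ le_rfl
    · exact bot_le
  rw [← h1, h2]
end

section
/- In a dcpo (or domain) D in which the set T of total elements is Scott-open and totals are maximal (y ⊑ z with y ∈ T implies y = z), if ψ : D → E is Scott-continuous and ψ(x) ∈ T_E for some x, then there is a compact x₀ ⊑ x with ψ(x₀) = ψ(x). -/
/-!
The compact elements below `x` form a directed set with supremum `x`, so by Scott continuity
their images form a directed set with supremum `ψ x`. As the totals are inaccessible by directed
suprema, some `ψ k` is total; since `ψ k ≤ ψ x` and totals are maximal, `ψ k = ψ x`.
-/

lemma dirSupInacc_of_sSup {E : Type*} [CompleteLattice E] {T : Set E}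
    (h : ∀ S : Set E, S.Nonempty → DirectedOn (· ≤ ·) S → sSup S ∈ T → ∃ y ∈ S, y ∈ T) :
    DirSupInacc T := by
  intro S hne hdir a ha haT
  obtain ⟨y, hyS, hyT⟩ := h S hne hdir (ha.sSup_eq ▸ haT)
  exact ⟨y, hyS, hyT⟩

lemma DirSupInacc.mem_of_isLUB_of_isMax {E : Type*} [PartialOrder E] {T : Set E}
    (hT : DirSupInacc T) (hTmax : ∀ y ∈ T, IsMax y) {S : Set E} (hne : S.Nonempty)
    (hdir : DirectedOn (· ≤ ·) S) {a : E} (ha : IsLUB S a) (haT : a ∈ T) : a ∈ S := by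
  obtain ⟨y, hyS, hyT⟩ := hT hne hdir ha haT
  have hya : y ≤ a := ha.1 hyS
  rwa [← (hTmax y hyT).eq_of_le hya]

lemma ScottContinuous.exists_map_eq_of_isLUB {D E : Type*} [Preorder D] [PartialOrder E]
    {ψ : D → E} (hψ : ScottContinuous ψ) {T : Set E} (hT : DirSupInacc T)
    (hTmax : ∀ y ∈ T, IsMax y) {S : Set D} (hne : S.Nonempty) (hdir : DirectedOn (· ≤ ·) S)
    {x : D} (hx : IsLUB S x) (hψx : ψ x ∈ T) : ∃ k ∈ S, ψ k = ψ x :=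
  hT.mem_of_isLUB_of_isMax hTmax (hne.image ψ) (hdir.mono_comp hψ.monotone)
    (hψ hne hdir hx) hψx

/-- In an algebraic domain in which the total elements form a Scott-open set of maximal
elements, a Scott-continuous map carrying `x` into the totals already carries some
compact approximation `x₀ ⊑ x` to the same value. -/
theorem compact_approx_total {D E : Type*} [CompleteLattice D] [CompleteLattice E]
    (TE : Set E)
    (hopen : ∀ S : Set E, S.Nonempty → DirectedOn (· ≤ ·) S → sSup S ∈ TE →
      ∃ y ∈ S, y ∈ TE)
    (hmax : ∀ y ∈ TE, ∀ z : E, y ≤ z → y = z)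
    (ψ : D → E) (hψ : ScottContinuous ψ)
    (x : D)
    (halg_ne : {k : D | IsCompactElement k ∧ k ≤ x}.Nonempty)
    (halg_dir : DirectedOn (· ≤ ·) {k : D | IsCompactElement k ∧ k ≤ x})
    (halg_sup : x = sSup {k : D | IsCompactElement k ∧ k ≤ x})
    (hx : ψ x ∈ TE) :
    ∃ x₀ : D, IsCompactElement x₀ ∧ x₀ ≤ x ∧ ψ x₀ = ψ x := by
  have hTmax : ∀ y ∈ TE, IsMax y := fun y hy z hyz => (hmax y hy z hyz).ge
  have hlub : IsLUB {k : D | IsCompactElement k ∧ k ≤ x} x := by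
    nth_rw 2 [halg_sup]
    exact isLUB_sSup _
  obtain ⟨k, ⟨hk_compact, hk_le⟩, hk⟩ :=
    hψ.exists_map_eq_of_isLUB (dirSupInacc_of_sSup hopen) hTmax halg_ne halg_dir hlub hx
  exact ⟨k, hk_compact, hk_le, hk⟩
end

section
/- Totality of the simple recursor: Let Φ be the least fixed point of Φ f x = f x (λa. if a ≻ x then Φ f (x ⊕ a) else 0_θ) in the partial continuous functionals. Suppose there exist a partial order < on the total elements T_σ and L ⊆ T_σ such that < is compatible with (⊕,≺) (i.e. x < x ⊕ a whenever x ≺ a for total x, a) and chain bounded with respect to the approximation ⌊·⌋ and L (every nonempty chain has an upper bound in L agreeing with some chain member on each approximation). Let f be total. If Φf is piecewise continuous with respect to ⌊·⌋ and L, then Φf is total. -/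
/-- Totality of the simple recursor `Φ f x = f x (λa. if a ≻ x then Φ f (x ⊕ a) else 0)`
(Theorem 4.4 of the paper), stated abstractly over the partial continuous functionals:
`σP, ρP, θP, δP, νP` are the domains of partial objects with hereditarily total elements
`Tσ, Tρ, Tθ, Tδ`.  If `<` is a strict partial order on the totals compatible with
`(⊕,≺)` and chain bounded w.r.t. the approximation function and `L`, `f` is total, and
`Φf` is piecewise continuous w.r.t. the approximation function and `L`, then `Φf` is
total. -/
theorem simple_recursor_total {σP ρP θP δP νP : Type*}
    (Tσ : Set σP) (Tρ : Set ρP) (Tθ : Set θP) (Tδ : Set δP)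
    (app : σP → δP → νP) (oplus : σP → ρP → σP) (prec : σP → ρP → Bool)
    (θ0 : θP) (hθ0 : θ0 ∈ Tθ)
    (hoplus_tot : ∀ x ∈ Tσ, ∀ a ∈ Tρ, oplus x a ∈ Tσ)
    (lt : σP → σP → Prop) (hirr : ∀ x, ¬ lt x x) (htrans : Transitive lt)
    (L : Set σP) (hL : L ⊆ Tσ)
    -- compatibility of < with (⊕,≺)
    (hcompat : ∀ x ∈ Tσ, ∀ a ∈ Tρ, prec x a = true → lt x (oplus x a))
    -- chain boundedness w.r.t. the approximation function and L
    (hcb : ∀ γ : Set σP, γ ⊆ Tσ → γ.Nonempty →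
      (∀ x ∈ γ, ∀ y ∈ γ, x ≠ y → lt x y ∨ lt y x) →
      ∃ u ∈ L, (∀ x ∈ γ, x = u ∨ lt x u) ∧ ∀ d ∈ Tδ, ∃ x ∈ γ, app u d = app x d)
    -- f is total
    (f : σP → (ρP → θP) → θP)
    (hf : ∀ x ∈ Tσ, ∀ p : ρP → θP, (∀ a ∈ Tρ, p a ∈ Tθ) → f x p ∈ Tθ)
    -- Φf satisfies the recursive defining equation
    (Φf : σP → θP)
    (hfix : ∀ x : σP, Φf x = f x (fun a => if prec x a then Φf (oplus x a) else θ0))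
    -- Φf is piecewise continuous w.r.t. the approximation function and L
    (hpc : ∀ x ∈ L, Φf x ∈ Tθ → ∃ d ∈ Tδ, ∀ y ∈ Tσ, app x d = app y d → Φf y ∈ Tθ) :
    ∀ x ∈ Tσ, Φf x ∈ Tθ := by
  classical
  by_contra hcon
  push_neg at hcon
  obtain ⟨x0, hx0T, hx0⟩ := hcon
  -- the set of total "bad" points
  set S : Set σP := {x | x ∈ Tσ ∧ Φf x ∉ Tθ} with hS
  have hx0S : x0 ∈ S := ⟨hx0T, hx0⟩
  haveI : Nonempty S := ⟨⟨x0, hx0S⟩⟩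
  -- relation on S
  let r : S → S → Prop := fun x y => x = y ∨ lt x.1 y.1
  have rtrans : ∀ {a b c : S}, r a b → r b c → r a c := by
    rintro a b c (rfl | hab) (h | hbc)
    · exact Or.inl h
    · exact Or.inr hbc
    · exact Or.inr (h ▸ hab)
    · exact Or.inr (htrans hab hbc)
  have hzorn : ∃ m : S, ∀ a : S, r m a → r a m := by
    apply exists_maximal_of_nonempty_chains_bounded (r := r) _ rtrans
    intro c hc hcne
    -- image chain in σP
    set γ : Set σP := Subtype.val '' c with hγ
    have hγT : γ ⊆ Tσ := by
      rintro x ⟨⟨x, hxS⟩, hxc, rfl⟩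
      exact hxS.1
    have hγne : γ.Nonempty := hcne.image _
    have hγch : ∀ x ∈ γ, ∀ y ∈ γ, x ≠ y → lt x y ∨ lt y x := by
      rintro x ⟨x', hx'c, rfl⟩ y ⟨y', hy'c, rfl⟩ hxy
      have hne : x' ≠ y' := fun h => hxy (by rw [h])
      rcases hc hx'c hy'c hne with (h | h) | (h | h)
      · exact absurd h hne
      · exact Or.inl h
      · exact absurd h.symm hne
      · exact Or.inr h
    obtain ⟨u, huL, hub, hagree⟩ := hcb γ hγT hγne hγch
    have huT : u ∈ Tσ := hL huL
    -- u is itself bad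
    have huS : u ∈ S := by
      refine ⟨huT, fun huθ => ?_⟩
      obtain ⟨d, hdT, hd⟩ := hpc u huL huθ
      obtain ⟨x, hxγ, hxd⟩ := hagree d hdT
      have hxS : x ∈ S := by
        rcases hxγ with ⟨x', hx'c, rfl⟩
        exact x'.2
      exact hxS.2 (hd x (hγT hxγ) hxd)
    refine ⟨⟨u, huS⟩, ?_⟩
    intro a hac
    rcases hub a.1 ⟨a, hac, rfl⟩ with h | h
    · exact Or.inl (Subtype.ext h)
    · exact Or.inr h
  obtain ⟨m, hm⟩ := hzorn
  -- m is maximal and bad; derive contradiction from the fixed point equation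
  have hmT : m.1 ∈ Tσ := m.2.1
  have hmgood : Φf m.1 ∈ Tθ := by
    rw [hfix]
    apply hf m.1 hmT
    intro a haT
    by_cases hpa : prec m.1 a = true
    · simp only [hpa, if_true]
      set y := oplus m.1 a with hy
      have hyT : y ∈ Tσ := hoplus_tot m.1 hmT a haT
      have hlt : lt m.1 y := hcompat m.1 hmT a haT hpa
      by_contra hybad
      have hyS : y ∈ S := ⟨hyT, hybad⟩
      rcases hm ⟨y, hyS⟩ (Or.inr hlt) with h | h
      · exact hirr m.1 ((congrArg Subtype.val h) ▸ hlt)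
      · exact hirr m.1 (htrans hlt h)
    · simp only [hpa, if_false]
      exact hθ0
  exact m.2.2 hmgood
end

section
/- Correctness of the realizer for the functional interpretation of Zorn's lemma (abstract verification): Assume given maps ⌊·⌋ : σ × δ → ν, ⊕ : σ × ρ → σ, a decidable relation ≺ : σ × ρ → Bool, a decidable predicate Q on ν, functions Ω : (σ → (ρ → δ) → δ) → σ → δ and e, satisfying the recursive equation ΩFx = F x̄ (Ω_{F,x̄}) where x̄ := eFx(Ω_{F,x}) and Ω_{F,x}(a) := if a ≻ x then ΩF(x ⊕ a) else 0_δ, together with the 'relevant part' axiom ⌊x⌋_{ΩFx} = ⌊x̄⌋_{ΩFx} for all x, F. Further assume a function Γ : (σ → (ρ→δ)→δ) → (σ → (ρ→δ)→ρ) → σ → List σ satisfying ΓFGx = y :: (if C(G,y,Ω_{F,y}) then [] else ΓFG(y ⊕ G y Ω_{F,y})) where y := x̄ and C(G,y,h) := (G y h ≻ y → ¬Q(⌊y ⊕ G y h⌋_{h(G y h)})), and that ΓFGx is always a nonempty finite list. Then, defining r := ΩFx, s := last(ΓFGx), t := Ω_{F,s}, for all x, F, G: Q(⌊x⌋_r)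 → Q(⌊s⌋_{F s t}) ∧ C(G,s,t). -/
/-!
Along the list `ΓFGx` the invariant `Q(⌊x⌋_{ΩFx})` is carried from each starting point `x` to the
next one `x̄ ⊕ G x̄ Ω_{F,x̄}`: when `C(G, x̄, Ω_{F,x̄})` fails, `G x̄ Ω_{F,x̄} ≻ x̄` holds, so
`Ω_{F,x̄}(G x̄ Ω_{F,x̄})` unfolds to `ΩF(x̄ ⊕ G x̄ Ω_{F,x̄})`. The last element `s` of the list is `x̄` for
a starting point `x` satisfying the invariant at which `C` holds, and the recursive equation for `Ω`
together with the relevant-part axiom give `⌊s⌋_{F s Ω_{F,s}} = ⌊x̄⌋_{ΩFx} = ⌊x⌋_{ΩFx}`.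
-/

section

variable {σ ρ δ ν : Type*}

/-- `Ω_{F,x} = λa. if a ≻ x then ΩF(x ⊕ a) else 0_δ`. -/
def Osub (d0 : δ) (oplus : σ → ρ → σ) (prec : σ → ρ → Bool)
    (Ω : (σ → (ρ → δ) → δ) → σ → δ) (F : σ → (ρ → δ) → δ) (x : σ) : ρ → δ :=
  fun a => if prec x a then Ω F (oplus x a) else d0

/-- `x̄ := e F x Ω_{F,x}`, the truncation of `x`. -/
def trunc (d0 : δ) (oplus : σ → ρ → σ) (prec : σ → ρ → Bool)
    (Ω : (σ → (ρ → δ) → δ) → σ → δ)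
    (e : (σ → (ρ → δ) → δ) → σ → (ρ → δ) → σ) (F : σ → (ρ → δ) → δ) (x : σ) : σ :=
  e F x (Osub d0 oplus prec Ω F x)

/-- `C(G,y,h) :≡ (G y h ≻ y → ¬Q(⌊y ⊕ G y h⌋_{h(G y h)}))`. -/
def Cpred (app : σ → δ → ν) (oplus : σ → ρ → σ) (prec : σ → ρ → Bool) (Q : ν → Prop)
    (G : σ → (ρ → δ) → ρ) (y : σ) (h : ρ → δ) : Prop :=
  prec y (G y h) = true → ¬ Q (app (oplus y (G y h)) (h (G y h)))

theorem List.exists_getLast?_eq_of_unfold {α : Type*} (Γ : α → List α) (y next : α → α)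
    (final I : α → Prop) [DecidablePred final]
    (hΓ : ∀ x, Γ x = y x :: if final (y x) then [] else Γ (next (y x)))
    (hnext : ∀ z, ¬ final z → I (next z)) (x : α) (hx : I x) :
    ∃ x', I x' ∧ final (y x') ∧ (Γ x).getLast? = some (y x') := by
  generalize hl : Γ x = l
  induction l generalizing x with
  | nil => exact absurd (hΓ x ▸ hl) (List.cons_ne_nil _ _)
  | cons a rest ih =>
    obtain ⟨rfl, hrest⟩ := List.cons.inj (hΓ x ▸ hl)
    by_cases hfinal : final (y x)
    · rw [if_pos hfinal] at hrest
      exact ⟨x, hx, hfinal, by rw [← hrest, List.getLast?_singleton]⟩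
    · rw [if_neg hfinal] at hrest
      obtain ⟨x', hx', hfinal', hlast⟩ := ih _ (hnext _ hfinal) hrest
      have hne : rest ≠ [] := hrest ▸ hΓ _ ▸ List.cons_ne_nil _ _
      exact ⟨x', hx', hfinal', by rw [List.getLast?_cons_of_ne_nil hne, hlast]⟩

theorem Osub_of_prec (d0 : δ) (oplus : σ → ρ → σ) (prec : σ → ρ → Bool)
    (Ω : (σ → (ρ → δ) → δ) → σ → δ) (F : σ → (ρ → δ) → δ) {x : σ} {a : ρ}
    (h : prec x a = true) : Osub d0 oplus prec Ω F x a = Ω F (oplus x a) :=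
  if_pos h

theorem not_Cpred_iff (app : σ → δ → ν) (oplus : σ → ρ → σ) (prec : σ → ρ → Bool)
    (Q : ν → Prop) (G : σ → (ρ → δ) → ρ) (y : σ) (h : ρ → δ) :
    ¬ Cpred app oplus prec Q G y h ↔
      prec y (G y h) = true ∧ Q (app (oplus y (G y h)) (h (G y h))) := by
  rw [Cpred, Classical.not_imp, not_not]

theorem Q_app_Ω_oplus_of_not_Cpred (d0 : δ) (app : σ → δ → ν) (oplus : σ → ρ → σ)
    (prec : σ → ρ → Bool) (Q : ν → Prop) (Ω : (σ → (ρ → δ) → δ) → σ → δ)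
    (F : σ → (ρ → δ) → δ) (G : σ → (ρ → δ) → ρ) {y : σ}
    (hC : ¬ Cpred app oplus prec Q G y (Osub d0 oplus prec Ω F y)) :
    Q (app (oplus y (G y (Osub d0 oplus prec Ω F y)))
      (Ω F (oplus y (G y (Osub d0 oplus prec Ω F y))))) := by
  obtain ⟨hprec, hQ⟩ := (not_Cpred_iff app oplus prec Q G y _).mp hC
  rwa [Osub_of_prec d0 oplus prec Ω F hprec] at hQ

theorem app_trunc_eq_app (d0 : δ) (app : σ → δ → ν) (oplus : σ → ρ → σ)
    (prec : σ → ρ → Bool) (Ω : (σ → (ρ → δ) → δ) → σ → δ)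
    (e : (σ → (ρ → δ) → δ) → σ → (ρ → δ) → σ)
    (hΩ : ∀ (F : σ → (ρ → δ) → δ) (x : σ),
      Ω F x = F (trunc d0 oplus prec Ω e F x)
        (Osub d0 oplus prec Ω F (trunc d0 oplus prec Ω e F x)))
    (hRP : ∀ (F : σ → (ρ → δ) → δ) (x : σ),
      app x (Ω F x) = app (trunc d0 oplus prec Ω e F x) (Ω F x))
    (F : σ → (ρ → δ) → δ) (x : σ) :
    app (trunc d0 oplus prec Ω e F x)
        (F (trunc d0 oplus prec Ω e F x) (Osub d0 oplus prec Ω F (trunc d0 oplus prec Ω e F x))) =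
      app x (Ω F x) := by
  rw [hRP, hΩ]

open scoped Classical in
/-- Correctness of the realizer of the functional interpretation of Zorn's lemma
(Theorem 5.2 of the paper): given `Ω` and `Γ` satisfying their recursive defining
equations and the relevant-part axiom, the terms `r := ΩFx`, `s := last(ΓFGx)`,
`t := Ω_{F,s}` satisfy `Q(⌊x⌋_r) → Q(⌊s⌋_{Fst}) ∧ C(G,s,t)`. -/
theorem zorn_realizer_correct [Inhabited σ] (d0 : δ)
    (app : σ → δ → ν) (oplus : σ → ρ → σ) (prec : σ → ρ → Bool) (Q : ν → Prop)
    (Ω : (σ → (ρ → δ) → δ) → σ → δ)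
    (e : (σ → (ρ → δ) → δ) → σ → (ρ → δ) → σ)
    (Γ : (σ → (ρ → δ) → δ) → (σ → (ρ → δ) → ρ) → σ → List σ)
    -- the recursive defining equation of Ω
    (hΩ : ∀ (F : σ → (ρ → δ) → δ) (x : σ),
      Ω F x = F (trunc d0 oplus prec Ω e F x)
        (Osub d0 oplus prec Ω F (trunc d0 oplus prec Ω e F x)))
    -- the relevant-part axiom
    (hRP : ∀ (F : σ → (ρ → δ) → δ) (x : σ),
      app x (Ω F x) = app (trunc d0 oplus prec Ω e F x) (Ω F x))
    -- the recursive defining equation of Γ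
    (hΓ : ∀ (F : σ → (ρ → δ) → δ) (G : σ → (ρ → δ) → ρ) (x : σ),
      Γ F G x = (trunc d0 oplus prec Ω e F x) ::
        (if Cpred app oplus prec Q G (trunc d0 oplus prec Ω e F x)
              (Osub d0 oplus prec Ω F (trunc d0 oplus prec Ω e F x)) then ([] : List σ)
         else Γ F G (oplus (trunc d0 oplus prec Ω e F x)
            (G (trunc d0 oplus prec Ω e F x)
               (Osub d0 oplus prec Ω F (trunc d0 oplus prec Ω e F x)))))) :
    ∀ (x : σ) (F : σ → (ρ → δ) → δ) (G : σ → (ρ → δ) → ρ),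
      Q (app x (Ω F x)) →
        Q (app ((Γ F G x).getLast!)
            (F ((Γ F G x).getLast!) (Osub d0 oplus prec Ω F ((Γ F G x).getLast!)))) ∧
          Cpred app oplus prec Q G ((Γ F G x).getLast!)
            (Osub d0 oplus prec Ω F ((Γ F G x).getLast!)) := by
  intro x F G hQ
  obtain ⟨x', hQ', hC, hlast⟩ := List.exists_getLast?_eq_of_unfold (Γ F G)
    (trunc d0 oplus prec Ω e F) (fun y => oplus y (G y (Osub d0 oplus prec Ω F y)))
    (fun y => Cpred app oplus prec Q G y (Osub d0 oplus prec Ω F y))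
    (fun x => Q (app x (Ω F x))) (hΓ F G)
    (fun _ => Q_app_Ω_oplus_of_not_Cpred d0 app oplus prec Q Ω F G) x hQ
  rw [List.getLast!_of_getLast? hlast, app_trunc_eq_app d0 app oplus prec Ω e hΩ hRP]
  exact ⟨hQ', hC⟩

end
end
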